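/- Consider the 2-way ε-filter automaton M with states {0,1,2}, initial and all-final, and transitions: from 0: (x:x)→0, (ε1:ε1)→1, (ε2:ε2)→2, (ε2:ε1)→0; from 1: (ε1:ε1)→1, (x:x)→0; from 2: (ε2:ε2)→2, (x:x)→0. Then M accepts exactly the words over {a,b,c,x} (with a=(ε1:ε1), b=(ε2:ε2), c=(ε2:ε1)) that avoid the factors ab, ba, ac, bc. -/

import Mathlib

/-!
Avoiding ab, ba, ac, bc is a condition on adjacent letters only, i.e. a chain condition
`List.IsChain`. The filter checks it letter by letter: states 1 and 2 remember a preceding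
`a` or `b`, and state 0 remembers nothing, since no forbidden factor starts with `c` or `x`.
-/

/-- The 4-letter alphabet {a, b, c, x}. -/
inductive Ltr | a | b | c | x
deriving DecidableEq

/-- The forbidden two-letter factors: ab, ba, ac, bc. -/
def forb : List (List Ltr) := [[.a, .b], [.b, .a], [.a, .c], [.b, .c]]

/-- `w` avoids all of ab, ba, ac, bc as factors. -/
def Avoids (w : List Ltr) : Prop := ∀ f ∈ forb, ¬ f <:+: w

/-- Moves on the 2-dimensional grid: a = (1,0), b = (0,1), c = (1,1), x = (1,1). -/
def mv : Ltr → ℕ × ℕ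
  | .a => (1, 0)
  | .b => (0, 1)
  | .c => (1, 1)
  | .x => (1, 1)

/-- Total displacement of a word. -/
def disp (w : List Ltr) : ℕ × ℕ := (w.map mv).sum

/-- `w` is a word over {a,b,c} whose moves go from `(p,q)` to `(r,s)`. -/
def Connects (p q r s : ℕ) (w : List Ltr) : Prop :=
  Ltr.x ∉ w ∧ p + (disp w).1 = r ∧ q + (disp w).2 = s

/-- The transition function of the 2-way ε-filter M, completed with a dead
state `none`. States 0, 1, 2 are `some 0`, `some 1`, `some 2`. With
a = (ε1:ε1), b = (ε2:ε2), c = (ε2:ε1), x = (x:x):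
from 0: x→0, a→1, b→2, c→0; from 1: a→1, x→0; from 2: b→2, x→0. -/
def filtStep (q : Option (Fin 3)) (l : Ltr) : Option (Fin 3) :=
  match q with
  | none => none
  | some q =>
    if q = 0 then
      match l with
      | .a => some 1
      | .b => some 2
      | .c => some 0
      | .x => some 0
    else if q = 1 then
      match l with
      | .a => some 1
      | .x => some 0
      | _ => none
    else
      match l with
      | .b => some 2
      | .x => some 0
      | _ => none

/-- The 2-way ε-filter automaton M: initial state 0, all (non-dead) states
final. -/
def filtM : DFA Ltr (Option (Fin 3)) :=
  ⟨filtStep, some 0, {q | q ≠ none}⟩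

theorem List.isChain_iff_forall_pair_infix {α : Type*} {R : α → α → Prop} {l : List α} :
    l.IsChain R ↔ ∀ a b, [a, b] <:+: l → R a b := by
  rw [List.isChain_iff_forall_rel_of_append_cons_cons]
  constructor
  · rintro h a b ⟨s, t, rfl⟩
    exact h (l₁ := s) (l₂ := t) (by simp)
  · rintro h a b s t rfl
    exact h a b ⟨s, t, by simp⟩

def Admissible (l q : Ltr) : Prop := [l, q] ∉ forb

theorem avoids_iff_isChain (w : List Ltr) : Avoids w ↔ w.IsChain Admissible := by
  rw [List.isChain_iff_forall_pair_infix]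
  refine ⟨fun h l q hlq hforb => h _ hforb hlq, fun h f hf => ?_⟩
  obtain ⟨l, q, rfl⟩ : ∃ l q, f = [l, q] := by
    simp only [forb, List.mem_cons, List.not_mem_nil, or_false] at hf
    rcases hf with rfl | rfl | rfl | rfl <;> exact ⟨_, _, rfl⟩
  exact fun hlq => h l q hlq hf

def memory : Fin 3 → List Ltr
  | 0 => []
  | 1 => [.a]
  | 2 => [.b]

theorem evalFrom_none (w : List Ltr) : filtM.evalFrom none w = none := by
  induction w with
  | nil => rfl
  | cons l w ih => exact ih

theorem evalFrom_some_ne_none_iff (q : Fin 3) (w : List Ltr) :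
    filtM.evalFrom (some q) w ≠ none ↔ (memory q ++ w).IsChain Admissible := by
  induction w generalizing q with
  | nil => fin_cases q <;> simp [memory]
  | cons l w ih =>
    change filtM.evalFrom (filtStep (some q) l) w ≠ none ↔ _
    fin_cases q <;> cases l <;>
      simp [filtStep, memory, evalFrom_none, ih, List.isChain_cons, Admissible, forb]

/-- The filter M accepts exactly the words over {a,b,c,x} avoiding the factors
ab, ba, ac, bc. -/
theorem filter_accepts_iff_avoids :
    ∀ w : List Ltr, w ∈ filtM.accepts ↔ Avoids w := by
  intro w
  rw [avoids_iff_isChain, DFA.mem_accepts]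
  exact evalFrom_some_ne_none_iff 0 w
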